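/- arXiv:1310.5534 — 4 statements merged into one kernel-verified Lean document; each statement's English description precedes it below -/
import Mathlib

section
/- Consider the car–truck congestion game with zero congestion taxes, car utilities U_i(z,x) = ξ_i^c(z_i) + a·n_{z_i}(z,x) + b, and truck utilities V_j(x,z) = ξ_j^t(x_j) + a·n_{x_j}(z,x) + b + β(a·n_{x_j}(z,x)+b)·g(m_{x_j}(x)), where a ≠ 0, |R| ≥ 2, N ≥ 1, M ≥ 1, and g is a nondecreasing function with g(1) > 0. If β ≠ 0, then the game does not admit an exact potential function. -/
/-- `n_r(z,x)`: total number of vehicles (cars and trucks) using interval `r`. -/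
def nCount {R : Type*} [DecidableEq R] {N M : ℕ}
    (z : Fin N → R) (x : Fin M → R) (r : R) : ℕ :=
  (Finset.univ.filter fun ℓ => z ℓ = r).card + (Finset.univ.filter fun ℓ => x ℓ = r).card

/-- `m_r(x)`: number of trucks using interval `r`. -/
def mCount {R : Type*} [DecidableEq R] {M : ℕ} (x : Fin M → R) (r : R) : ℕ :=
  (Finset.univ.filter fun ℓ => x ℓ = r).card

/-- Car utility with zero tax. -/
def carU {R : Type*} [DecidableEq R] {N M : ℕ} (a b : ℝ) (ξc : Fin N → R → ℝ)
    (i : Fin N) (z : Fin N → R) (x : Fin M → R) : ℝ :=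
  ξc i (z i) + a * (nCount z x (z i) : ℝ) + b

/-- Truck utility with zero tax. -/
def truckU {R : Type*} [DecidableEq R] {N M : ℕ} (a b β : ℝ) (g : ℕ → ℝ)
    (ξt : Fin M → R → ℝ) (j : Fin M) (x : Fin M → R) (z : Fin N → R) : ℝ :=
  ξt j (x j) + a * (nCount z x (x j) : ℝ) + b
    + β * (a * (nCount z x (x j) : ℝ) + b) * g (mCount x (x j))

/-!
An exact potential forces the utility changes along any closed four-step cycle of unilateral
deviations (car `i` moves, truck `j` moves, car `i` moves back, truck `j` moves back) to sum to
zero. Starting from the profile where every vehicle uses `r` and letting car `i` and truck `j`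
switch to `s ≠ r`, the linear congestion terms cancel around the cycle and only the truck
surcharge remains: the sum is `-a β (g M + g 1)`, which is nonzero because `g M ≥ g 1 > 0`.
-/

open Function Finset

theorem potential_four_cycle_sum_eq_zero {ι κ A B : Type*} [DecidableEq ι] [DecidableEq κ]
    (Φ : (κ → B) → (ι → A) → ℝ) (U : ι → (ι → A) → (κ → B) → ℝ)
    (V : κ → (κ → B) → (ι → A) → ℝ)
    (hU : ∀ i z x c, Φ x z - Φ x (update z i c) = U i z x - U i (update z i c) x)
    (hV : ∀ j x z d, Φ x z - Φ (update x j d) z = V j x z - V j (update x j d) z)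
    (i : ι) (j : κ) (z : ι → A) (x : κ → B) (c : A) (d : B) :
    (U i z x - U i (update z i c) x)
      + (V j x (update z i c) - V j (update x j d) (update z i c))
      + (U i (update z i c) (update x j d) - U i z (update x j d))
      + (V j (update x j d) z - V j x z) = 0 := by
  have hz : update (update z i c) i (z i) = z := by simp
  have hx : update (update x j d) j (x j) = x := by simp
  have hU' := hU i (update z i c) (update x j d) (z i)
  have hV' := hV j (update x j d) z (x j)
  rw [hz] at hU'
  rw [hx] at hV'
  rw [← hU, ← hV, ← hU', ← hV']
  ring

section Counting

variable {ι A : Type*} [Fintype ι] [DecidableEq ι] [DecidableEq A] {r s : A}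

theorem card_filter_update_const_eq_new (h : r ≠ s) (i : ι) :
    #{ℓ | update (fun _ => r) i s ℓ = s} = 1 := by
  rw [card_eq_one]
  refine ⟨i, ?_⟩
  ext ℓ
  rcases eq_or_ne ℓ i with rfl | hℓ <;> simp [update_apply, *]

theorem card_filter_update_const_eq_old (h : r ≠ s) (i : ι) :
    #{ℓ | update (fun _ => r) i s ℓ = r} = Fintype.card ι - 1 := by
  have : ({ℓ | update (fun _ => r) i s ℓ = r} : Finset ι) = univ.erase i := by
    ext ℓ
    rcases eq_or_ne ℓ i with rfl | hℓ <;> simp [update_apply, *, Ne.symm h]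
  rw [this, card_erase_of_mem (mem_univ i), card_univ]

end Counting

theorem carU_truckU_four_cycle_sum {R : Type*} [DecidableEq R] {N M : ℕ} (hN : 1 ≤ N)
    (hM : 1 ≤ M) (a b β : ℝ) (g : ℕ → ℝ) (ξc : Fin N → R → ℝ) (ξt : Fin M → R → ℝ)
    {r s : R} (hrs : r ≠ s) (i : Fin N) (j : Fin M) :
    (carU a b ξc i (fun _ : Fin N => r) (fun _ : Fin M => r)
        - carU a b ξc i (update (fun _ : Fin N => r) i s) (fun _ : Fin M => r))
      + (truckU a b β g ξt j (fun _ : Fin M => r) (update (fun _ : Fin N => r) i s)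
          - truckU a b β g ξt j (update (fun _ : Fin M => r) j s) (update (fun _ : Fin N => r) i s))
      + (carU a b ξc i (update (fun _ : Fin N => r) i s) (update (fun _ : Fin M => r) j s)
          - carU a b ξc i (fun _ : Fin N => r) (update (fun _ : Fin M => r) j s))
      + (truckU a b β g ξt j (update (fun _ : Fin M => r) j s) (fun _ : Fin N => r)
          - truckU a b β g ξt j (fun _ : Fin M => r) (fun _ : Fin N => r))
      = -(a * β * (g M + g 1)) := by
  simp only [carU, truckU, nCount, mCount, update_self,
    card_filter_update_const_eq_new hrs, card_filter_update_const_eq_old hrs, hrs, filter_true,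
    filter_false, card_univ, card_empty, Fintype.card_fin, Nat.cast_add, Nat.cast_one,
    Nat.cast_sub hN, Nat.cast_sub hM]
  ring

/-- with zero congestion taxes, `a ≠ 0`, `|R| ≥ 2`, `N ≥ 1`, `M ≥ 1`,
`g` nondecreasing on `{1,…,M}` with `g(1) > 0`, and `β ≠ 0`, the car–truck
congestion game does not admit an exact potential function. -/
theorem no_exact_potential {R : Type*} [Fintype R] [DecidableEq R]
    (hR : 2 ≤ Fintype.card R) {N M : ℕ} (hN : 1 ≤ N) (hM : 1 ≤ M)
    (a b β : ℝ) (ha : a ≠ 0) (hβ : β ≠ 0)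
    (g : ℕ → ℝ) (hg : ∀ k, 1 ≤ k → k < M → g k ≤ g (k + 1)) (hg1 : 0 < g 1)
    (ξc : Fin N → R → ℝ) (ξt : Fin M → R → ℝ) :
    ¬ ∃ Φ : (Fin M → R) → (Fin N → R) → ℝ,
      (∀ (i : Fin N) (z : Fin N → R) (x : Fin M → R) (c : R),
        Φ x z - Φ x (Function.update z i c)
          = carU a b ξc i z x - carU a b ξc i (Function.update z i c) x) ∧
      (∀ (j : Fin M) (x : Fin M → R) (z : Fin N → R) (c : R),
        Φ x z - Φ (Function.update x j c) z
          = truckU a b β g ξt j x z - truckU a b β g ξt j (Function.update x j c) z) := by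
  rintro ⟨Φ, hcar, htruck⟩
  obtain ⟨r, s, hrs⟩ := Fintype.exists_pair_of_one_lt_card hR
  have hcycle := potential_four_cycle_sum_eq_zero Φ (carU a b ξc) (truckU a b β g ξt) hcar htruck
    ⟨0, hN⟩ ⟨0, hM⟩ (fun _ => r) (fun _ => r) s s
  rw [carU_truckU_four_cycle_sum hN hM a b β g ξc ξt hrs, neg_eq_zero] at hcycle
  have hg1M : g 1 ≤ g M :=
    monotoneOn_of_le_add_one Set.ordConnected_Icc (fun k _ hk hk1 => hg k hk.1 hk1.2)
      ⟨le_rfl, hM⟩ ⟨hM, le_rfl⟩ hM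
  exact mul_ne_zero (mul_ne_zero ha hβ) (by linarith) hcycle
end

section
/- Every finite game (finitely many players, each with a finite action set) that admits an exact potential function has at least one pure strategy Nash equilibrium; moreover, any maximizer of the potential function over the joint action space is a pure strategy Nash equilibrium. -/
/-! A unilateral deviation changes the deviating player's utility by exactly as much as it changes
the potential, so at a maximizer of the potential no deviation is profitable; on a finite joint
action space such a maximizer exists. -/

open Function

section PotentialGame

variable {ι : Type*} [DecidableEq ι] {A : ι → Type*}

def IsExactPotential (u : ι → (∀ q, A q) → ℝ) (Φ : (∀ q, A q) → ℝ) : Prop :=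
  ∀ (p : ι) (s : ∀ q, A q) (a : A p), Φ (update s p a) - Φ s = u p (update s p a) - u p s

def IsPureNashEquilibrium (u : ι → (∀ q, A q) → ℝ) (s : ∀ q, A q) : Prop :=
  ∀ (p : ι) (a : A p), u p (update s p a) ≤ u p s

variable {u : ι → (∀ q, A q) → ℝ} {Φ : (∀ q, A q) → ℝ}

theorem IsExactPotential.isPureNashEquilibrium_of_forall_le (hΦ : IsExactPotential u Φ)
    {s : ∀ q, A q} (hs : ∀ t, Φ t ≤ Φ s) : IsPureNashEquilibrium u s := fun p a => by
  linarith [hΦ p s a, hs (update s p a)]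

theorem IsExactPotential.exists_isPureNashEquilibrium [Finite ι] [∀ p, Finite (A p)]
    [∀ p, Nonempty (A p)] (hΦ : IsExactPotential u Φ) : ∃ s, IsPureNashEquilibrium u s :=
  let ⟨s, hs⟩ := Finite.exists_max Φ
  ⟨s, hΦ.isPureNashEquilibrium_of_forall_le hs⟩

end PotentialGame

/-- every finite game admitting an exact potential function has a
pure strategy Nash equilibrium; moreover any maximizer of the potential over the
joint action space is a pure strategy Nash equilibrium. -/
theorem finite_potential_game_has_pure_nash {ι : Type*} [Fintype ι] [DecidableEq ι]
    (A : ι → Type*) [∀ p, Fintype (A p)] [∀ p, Nonempty (A p)]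
    (u : ∀ _ : ι, (∀ q, A q) → ℝ) (Φ : (∀ q, A q) → ℝ)
    (hΦ : ∀ (p : ι) (s : ∀ q, A q) (a : A p),
      Φ (Function.update s p a) - Φ s = u p (Function.update s p a) - u p s) :
    (∃ s : ∀ q, A q, ∀ (p : ι) (a : A p), u p (Function.update s p a) ≤ u p s) ∧
    (∀ s : ∀ q, A q, (∀ t, Φ t ≤ Φ s) →
      ∀ (p : ι) (a : A p), u p (Function.update s p a) ≤ u p s) :=
  have hpot : IsExactPotential u Φ := hΦ
  ⟨hpot.exists_isPureNashEquilibrium, fun _ hs => hpot.isPureNashEquilibrium_of_forall_le hs⟩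
end

section
/- In the car–truck congestion game with the truck subsidy policy (truck utility V_j(x,z) = ξ_j^t(x_j) + (a·n_{x_j}(z,x)+b) + β·v_0·g(m_{x_j}(x)), car utility U_i(z,x) = ξ_i^c(z_i) + (a·n_{z_i}(z,x)+b)), for a unilateral truck deviation from x_j to x'_j ≠ x_j (with x' = (x'_j, x_{-j})), the change in the potential Ψ of Theorem 2 satisfies Ψ(x,z) − Ψ(x',z) = ξ_j^t(x_j) − ξ_j^t(x'_j) + (a·n_{x_j}(x,z)+b) − (a·n_{x'_j}(x',z)+b) + β·v_0·(g(m_{x_j}(x)) − g(m_{x'_j}(x'))) = V_j(x,z) − V_j(x',z). -/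
/-- Truck utility under the subsidy policy of Theorem 2. -/
def truckUsub {R : Type*} [DecidableEq R] {N M : ℕ} (a b β v0 : ℝ) (g : ℕ → ℝ)
    (ξt : Fin M → R → ℝ) (j : Fin M) (x : Fin M → R) (z : Fin N → R) : ℝ :=
  ξt j (x j) + (a * (nCount z x (x j) : ℝ) + b) + β * v0 * g (mCount x (x j))

/-- The potential function Ψ of Theorem 2. -/
def Psi {R : Type*} [Fintype R] [DecidableEq R] {N M : ℕ} (a b β v0 : ℝ) (g : ℕ → ℝ)
    (ξc : Fin N → R → ℝ) (ξt : Fin M → R → ℝ)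
    (x : Fin M → R) (z : Fin N → R) : ℝ :=
  (∑ i, ξc i (z i)) + (∑ j, ξt j (x j))
    + (∑ r : R, ∑ k ∈ Finset.Icc 1 (nCount z x r), (a * (k : ℝ) + b))
    + β * v0 * ∑ r : R, ∑ ℓ ∈ Finset.Icc 1 (mCount x r), g ℓ

/-!
Let `o r` count the vehicles (or trucks) other than truck `j` at interval `r`. Under the profile in which truck `j`
sits at `p`, every count is `o r + [p = r]`, and since `∑ k ∈ Icc 1 n, f k` grows by `f (n + 1)`
when `n` does, the congestion sums equal their values at `o` plus one term read off at `p`. The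
`o`-parts cancel between `x` and the deviation, leaving exactly the terms of truck `j`.
-/

open Finset

theorem sum_sum_Icc_of_eq_add_ite {R A : Type*} [Fintype R] [DecidableEq R] [AddCommMonoid A]
    (f : ℕ → A) (n o : R → ℕ) (p : R) (hn : ∀ r, n r = o r + if p = r then 1 else 0) :
    ∑ r, ∑ k ∈ Icc 1 (n r), f k = ∑ r, ∑ k ∈ Icc 1 (o r), f k + f (n p) := by
  have hterm : ∀ r, ∑ k ∈ Icc 1 (n r), f k
      = ∑ k ∈ Icc 1 (o r), f k + if p = r then f (n p) else 0 := by
    intro r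
    rw [hn r]
    split_ifs with hpr
    · subst hpr
      rw [sum_Icc_succ_top (by omega), hn p, if_pos rfl]
    · simp
  rw [sum_congr rfl fun r _ => hterm r, sum_add_distrib, sum_ite_eq, if_pos (mem_univ p)]

theorem sum_apply_update_sub {ι R A : Type*} [Fintype ι] [DecidableEq ι] [AddCommGroup A]
    (φ : ι → R → A) (x : ι → R) (j : ι) (c : R) :
    ∑ i, φ i (x i) - ∑ i, φ i (Function.update x j c i) = φ j (x j) - φ j c := by
  have hrest : ∑ i ∈ univ.erase j, φ i (Function.update x j c i) = ∑ i ∈ univ.erase j, φ i (x i) :=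
    sum_congr rfl fun i hi => by rw [Function.update_of_ne (ne_of_mem_erase hi)]
  rw [← add_sum_erase _ _ (mem_univ j), ← add_sum_erase _ _ (mem_univ j), hrest,
    Function.update_self]
  abel

theorem mCount_update {R : Type*} [DecidableEq R] {M : ℕ} (x : Fin M → R) (j : Fin M) (c r : R) :
    mCount (Function.update x j c) r = #{ℓ ∈ univ.erase j | x ℓ = r} + if c = r then 1 else 0 := by
  rw [mCount, card_filter, card_filter, ← sum_erase_add _ _ (mem_univ j), Function.update_self]
  congr 1
  exact sum_congr rfl fun ℓ hℓ => by rw [Function.update_of_ne (ne_of_mem_erase hℓ)]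

theorem nCount_eq_add_mCount {R : Type*} [DecidableEq R] {N M : ℕ} (z : Fin N → R) (x : Fin M → R)
    (r : R) : nCount z x r = #{ℓ | z ℓ = r} + mCount x r :=
  rfl

theorem psi_truck_deviation_general {R : Type*} [Fintype R] [DecidableEq R] {N M : ℕ}
    (a b β v0 : ℝ) (g : ℕ → ℝ) (ξc : Fin N → R → ℝ) (ξt : Fin M → R → ℝ)
    (z : Fin N → R) (x : Fin M → R) (j : Fin M) (c : R) :
    Psi a b β v0 g ξc ξt x z - Psi a b β v0 g ξc ξt (Function.update x j c) z
      = ξt j (x j) - ξt j c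
        + ((a * (nCount z x (x j) : ℝ) + b)
            - (a * (nCount z (Function.update x j c) c : ℝ) + b))
        + β * v0 * (g (mCount x (x j)) - g (mCount (Function.update x j c) c)) ∧
    Psi a b β v0 g ξc ξt x z - Psi a b β v0 g ξc ξt (Function.update x j c) z
      = truckUsub a b β v0 g ξt j x z
        - truckUsub a b β v0 g ξt j (Function.update x j c) z := by
  set x' := Function.update x j c
  -- `x` is itself the deviation of `x` to `x j`, so both profiles are counted alike.
  have hm : ∀ r, mCount x r = #{ℓ ∈ univ.erase j | x ℓ = r} + if x j = r then 1 else 0 := by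
    simpa using mCount_update x j (x j)
  have hm' : ∀ r, mCount x' r = #{ℓ ∈ univ.erase j | x ℓ = r} + if c = r then 1 else 0 :=
    mCount_update x j c
  have hn : ∀ r, nCount z x r = (#{ℓ | z ℓ = r} + #{ℓ ∈ univ.erase j | x ℓ = r})
      + if x j = r then 1 else 0 := fun r => by rw [nCount_eq_add_mCount, hm, add_assoc]
  have hn' : ∀ r, nCount z x' r = (#{ℓ | z ℓ = r} + #{ℓ ∈ univ.erase j | x ℓ = r})
      + if c = r then 1 else 0 := fun r => by rw [nCount_eq_add_mCount, hm', add_assoc]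
  have hpsi : Psi a b β v0 g ξc ξt x z - Psi a b β v0 g ξc ξt x' z
      = ξt j (x j) - ξt j c
        + ((a * (nCount z x (x j) : ℝ) + b) - (a * (nCount z x' c : ℝ) + b))
        + β * v0 * (g (mCount x (x j)) - g (mCount x' c)) := by
    rw [← sum_apply_update_sub ξt x j c]
    simp only [Psi, sum_sum_Icc_of_eq_add_ite _ _ _ _ hn, sum_sum_Icc_of_eq_add_ite _ _ _ _ hn',
      sum_sum_Icc_of_eq_add_ite _ _ _ _ hm, sum_sum_Icc_of_eq_add_ite _ _ _ _ hm']
    ring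
  refine ⟨hpsi, ?_⟩
  rw [hpsi, truckUsub, truckUsub, show x' j = c from Function.update_self j c x]
  ring

/-- for a unilateral truck deviation `x' = (x'_j, x_{-j})` with
`x_j ≠ x'_j`, the change in the potential Ψ equals the displayed expression,
which equals the change in the truck utility. -/
theorem psi_truck_deviation {R : Type*} [Fintype R] [DecidableEq R] {N M : ℕ}
    (a b β v0 : ℝ) (g : ℕ → ℝ) (ξc : Fin N → R → ℝ) (ξt : Fin M → R → ℝ)
    (z : Fin N → R) (x : Fin M → R) (j : Fin M) (c : R) (h : x j ≠ c) :
    Psi a b β v0 g ξc ξt x z - Psi a b β v0 g ξc ξt (Function.update x j c) z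
      = ξt j (x j) - ξt j c
        + ((a * (nCount z x (x j) : ℝ) + b)
            - (a * (nCount z (Function.update x j c) c : ℝ) + b))
        + β * v0 * (g (mCount x (x j)) - g (mCount (Function.update x j c) c)) ∧
    Psi a b β v0 g ξc ξt x z - Psi a b β v0 g ξc ξt (Function.update x j c) z
      = truckUsub a b β v0 g ξt j x z
        - truckUsub a b β v0 g ξt j (Function.update x j c) z :=
  psi_truck_deviation_general a b β v0 g ξc ξt z x j c
end

section
/- In the car–truck congestion game with the car tax of Theorem 1 (U_i(z,x) = ξ_i^c(z_i) + (a·n_{z_i}(z,x)+b) + aβ·Σ_{ℓ=1}^{m_{z_i}(x)} g(ℓ)), for a unilateral car deviation from z_i to z'_i ≠ z_i (with z' = (z'_i, z_{-i})), the term Φ_4(x,z) = −aβ·Σ_{r∈R} Σ_{ℓ=1}^{m_r(x)} Σ_{k=1}^{ℓ−1} g(k) is unchanged, and the full potential Φ of Theorem 1 satisfies Φ(x,z) − Φ(x,z') = ξ_i^c(z_i) − ξ_i^c(z'_i) + (a·n_{z_i}(z,x)+b) − (a·n_{z'_i}(z',x)+b) + aβ·(Σ_{ℓ=1}^{m_{z_i}(x)}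 g(ℓ) − Σ_{ℓ=1}^{m_{z'_i}(x)} g(ℓ)) = U_i(z,x) − U_i(z',x). -/
/-- Car utility with the congestion tax of Theorem 1:
`U_i(z,x) = ξ_i^c(z_i) + (a·n_{z_i}(z,x)+b) + aβ·Σ_{ℓ=1}^{m_{z_i}(x)} g(ℓ)`. -/
def carUtax {R : Type*} [DecidableEq R] {N M : ℕ} (a b β : ℝ) (g : ℕ → ℝ)
    (ξc : Fin N → R → ℝ) (i : Fin N) (z : Fin N → R) (x : Fin M → R) : ℝ :=
  ξc i (z i) + (a * (nCount z x (z i) : ℝ) + b)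
    + a * β * ∑ ℓ ∈ Finset.Icc 1 (mCount x (z i)), g ℓ

/-- The term `Φ₄(x,z) = −aβ·Σ_{r∈R} Σ_{ℓ=1}^{m_r(x)} Σ_{k=1}^{ℓ−1} g(k)`. -/
def Phi4 {R : Type*} [Fintype R] [DecidableEq R] {N M : ℕ} (a β : ℝ) (g : ℕ → ℝ)
    (x : Fin M → R) (_z : Fin N → R) : ℝ :=
  - (a * β * ∑ r : R, ∑ ℓ ∈ Finset.Icc 1 (mCount x r), ∑ k ∈ Finset.Icc 1 (ℓ - 1), g k)

/-- The potential function Φ of Theorem 1. -/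
def Phi {R : Type*} [Fintype R] [DecidableEq R] {N M : ℕ} (a b β : ℝ) (g : ℕ → ℝ)
    (ξc : Fin N → R → ℝ) (ξt : Fin M → R → ℝ)
    (x : Fin M → R) (z : Fin N → R) : ℝ :=
  (∑ i, ξc i (z i)) + (∑ j, ξt j (x j))
    + (∑ r : R, ∑ k ∈ Finset.Icc 1 (nCount z x r), (a * (k : ℝ) + b))
    + (∑ r : R, β * (a * (nCount z x r : ℝ) + b) * ∑ ℓ ∈ Finset.Icc 1 (mCount x r), g ℓ)
    + Phi4 a β g x z

/-!
Splitting off car `i`, the potential decomposes as `Φ(x,z) = Φ₋ᵢ(x,z) + U_i(z,x)`, where `Φ₋ᵢ`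
is the same potential computed with car `i` left out and hence does not depend on `z_i`:
car `i` raises only `n_{z_i}` by one, which adds the top summand `a·n_{z_i}+b` to the congestion
sum and `aβ·Σ_{ℓ ≤ m_{z_i}} g(ℓ)` to the tax term. So a deviation of car `i` changes `Φ` exactly
as it changes `U_i`, and `Φ₄` depends on the trucks alone.
-/

open Finset

theorem Finset.card_filter_eq_card_filter_erase_add {α : Type*} [DecidableEq α] (s : Finset α)
    (p : α → Prop) [DecidablePred p] {i : α} (hi : i ∈ s) :
    #(s.filter p) = #((s.erase i).filter p) + if p i then 1 else 0 := by
  simp only [card_filter, sum_erase_add s _ hi]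

theorem Fintype.sum_add_ite_eq {R M : Type*} [Fintype R] [DecidableEq R] [AddCommGroup M]
    (F : R → ℕ → M) (n : R → ℕ) (r₀ : R) :
    ∑ r, F r (n r + if r₀ = r then 1 else 0)
      = ∑ r, F r (n r) + (F r₀ (n r₀ + 1) - F r₀ (n r₀)) := by
  rw [← sub_eq_iff_eq_add', ← sum_sub_distrib]
  convert Finset.sum_ite_eq univ r₀ fun r => F r (n r + 1) - F r (n r) using 2 with r
  · split_ifs <;> simp
  · simp

section CarDeviation

variable {R : Type*} [DecidableEq R] {N M : ℕ}

def nCountOthers (z : Fin N → R) (x : Fin M → R) (i : Fin N) (r : R) : ℕ :=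
  #((univ.erase i).filter fun ℓ => z ℓ = r) + mCount x r

def PhiOthers [Fintype R] (a b β : ℝ) (g : ℕ → ℝ) (ξc : Fin N → R → ℝ) (ξt : Fin M → R → ℝ)
    (x : Fin M → R) (z : Fin N → R) (i : Fin N) : ℝ :=
  (∑ j ∈ univ.erase i, ξc j (z j)) + (∑ j, ξt j (x j))
    + (∑ r : R, ∑ k ∈ Icc 1 (nCountOthers z x i r), (a * (k : ℝ) + b))
    + (∑ r : R, β * (a * (nCountOthers z x i r : ℝ) + b) * ∑ ℓ ∈ Icc 1 (mCount x r), g ℓ)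
    + Phi4 a β g x z

theorem nCount_eq_nCountOthers_add (z : Fin N → R) (x : Fin M → R) (i : Fin N) (r : R) :
    nCount z x r = nCountOthers z x i r + if z i = r then 1 else 0 := by
  rw [nCount, nCountOthers, card_filter_eq_card_filter_erase_add _ _ (mem_univ i), mCount]
  ring

theorem nCountOthers_update (z : Fin N → R) (x : Fin M → R) (i : Fin N) (c : R) :
    nCountOthers (Function.update z i c) x i = nCountOthers z x i := by
  ext r
  unfold nCountOthers
  congr 2
  refine filter_congr fun j hj => ?_
  rw [Function.update_of_ne (ne_of_mem_erase hj)]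

theorem PhiOthers_update [Fintype R] (a b β : ℝ) (g : ℕ → ℝ) (ξc : Fin N → R → ℝ)
    (ξt : Fin M → R → ℝ) (x : Fin M → R) (z : Fin N → R) (i : Fin N) (c : R) :
    PhiOthers a b β g ξc ξt x (Function.update z i c) i = PhiOthers a b β g ξc ξt x z i := by
  have hξ : ∑ j ∈ univ.erase i, ξc j (Function.update z i c j) = ∑ j ∈ univ.erase i, ξc j (z j) :=
    sum_congr rfl fun j hj => by rw [Function.update_of_ne (ne_of_mem_erase hj)]
  rw [PhiOthers, PhiOthers, hξ, nCountOthers_update]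
  rfl

theorem Phi_eq_PhiOthers_add_carUtax [Fintype R] (a b β : ℝ) (g : ℕ → ℝ) (ξc : Fin N → R → ℝ)
    (ξt : Fin M → R → ℝ) (x : Fin M → R) (z : Fin N → R) (i : Fin N) :
    Phi a b β g ξc ξt x z = PhiOthers a b β g ξc ξt x z i + carUtax a b β g ξc i z x := by
  have hξ := (sum_erase_add univ (fun j => ξc j (z j)) (mem_univ i)).symm
  have hlin := Fintype.sum_add_ite_eq (fun _ n => ∑ k ∈ Icc 1 n, (a * (k : ℝ) + b))
    (nCountOthers z x i) (z i)
  have htax := Fintype.sum_add_ite_eq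
    (fun r n => β * (a * (n : ℝ) + b) * ∑ ℓ ∈ Icc 1 (mCount x r), g ℓ) (nCountOthers z x i) (z i)
  simp only [Phi, PhiOthers, carUtax, nCount_eq_nCountOthers_add z x i]
  rw [hξ, hlin, htax, sum_Icc_succ_top (by omega)]
  push_cast
  ring

end CarDeviation

theorem phi_car_deviation_general {R : Type*} [Fintype R] [DecidableEq R] {N M : ℕ}
    (a b β : ℝ) (g : ℕ → ℝ) (ξc : Fin N → R → ℝ) (ξt : Fin M → R → ℝ)
    (z : Fin N → R) (x : Fin M → R) (i : Fin N) (c : R) :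
    Phi4 a β g x z = Phi4 a β g x (Function.update z i c) ∧
    Phi a b β g ξc ξt x z - Phi a b β g ξc ξt x (Function.update z i c)
      = ξc i (z i) - ξc i c
        + ((a * (nCount z x (z i) : ℝ) + b)
            - (a * (nCount (Function.update z i c) x c : ℝ) + b))
        + a * β * ((∑ ℓ ∈ Finset.Icc 1 (mCount x (z i)), g ℓ)
            - ∑ ℓ ∈ Finset.Icc 1 (mCount x c), g ℓ) ∧
    Phi a b β g ξc ξt x z - Phi a b β g ξc ξt x (Function.update z i c)
      = carUtax a b β g ξc i z x - carUtax a b β g ξc i (Function.update z i c) x := by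
  have hU : Phi a b β g ξc ξt x z - Phi a b β g ξc ξt x (Function.update z i c)
      = carUtax a b β g ξc i z x - carUtax a b β g ξc i (Function.update z i c) x := by
    rw [Phi_eq_PhiOthers_add_carUtax, Phi_eq_PhiOthers_add_carUtax, PhiOthers_update]
    ring
  refine ⟨rfl, ?_, hU⟩
  rw [hU, carUtax, carUtax, Function.update_self]
  ring

/-- for a unilateral car deviation `z' = (z'_i, z_{-i})` with
`z_i ≠ z'_i`, the term Φ₄ is unchanged (it does not depend on `z`), and the
change in Φ equals the displayed expression, which equals the change in the car
utility. -/
theorem phi_car_deviation {R : Type*} [Fintype R] [DecidableEq R] {N M : ℕ}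
    (a b β : ℝ) (g : ℕ → ℝ) (ξc : Fin N → R → ℝ) (ξt : Fin M → R → ℝ)
    (z : Fin N → R) (x : Fin M → R) (i : Fin N) (c : R) (h : z i ≠ c) :
    Phi4 a β g x z = Phi4 a β g x (Function.update z i c) ∧
    Phi a b β g ξc ξt x z - Phi a b β g ξc ξt x (Function.update z i c)
      = ξc i (z i) - ξc i c
        + ((a * (nCount z x (z i) : ℝ) + b)
            - (a * (nCount (Function.update z i c) x c : ℝ) + b))
        + a * β * ((∑ ℓ ∈ Finset.Icc 1 (mCount x (z i)), g ℓ)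
            - ∑ ℓ ∈ Finset.Icc 1 (mCount x c), g ℓ) ∧
    Phi a b β g ξc ξt x z - Phi a b β g ξc ξt x (Function.update z i c)
      = carUtax a b β g ξc i z x - carUtax a b β g ξc i (Function.update z i c) x :=
  phi_car_deviation_general a b β g ξc ξt z x i c
end
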